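/- arXiv:2007.01953 — 4 statements merged into one kernel-verified Lean document; each statement's English description precedes it below -/
import Mathlib

section
/- Along any solution of the single-host Holt–Lawton model with x_1(0) > 0, the inequality ln x_1(t+1) ≤ ln(R_max·x_1(0)) + Σ_{s=1}^{t} (ln R_1(s) - a_1(s)·I(s-1)) holds for all t ≥ 1. -/
/-!
Taking logarithms, `ln x (t+1) = ln x t + ln R t - a t * y t`. Every parasitoid generation
after the first contains at least the immigrants of the previous step, `y t ≥ I (t-1)`, so each
step lowers the log host density by at least `a t * I (t-1)`; the first step is bounded using
only `y 0 ≥ 0` and `R 0 ≤ Rmax`, and the bound follows by telescoping.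
-/

open Real Finset

theorem le_add_sum_Icc_of_succ_le {f g : ℕ → ℝ}
    (h : ∀ t, 1 ≤ t → f (t + 1) ≤ f t + g t) :
    ∀ t, f (t + 1) ≤ f 1 + ∑ s ∈ Icc 1 t, g s
  | 0 => by simp
  | t + 1 => by
    rw [sum_Icc_succ_top (by omega)]
    linarith [h (t + 1) (by omega), le_add_sum_Icc_of_succ_le h t]

namespace HoltLawton

variable {x y R a I : ℕ → ℝ}

theorem host_pos (hR : ∀ t, 0 < R t) (hx0 : 0 < x 0)
    (hx : ∀ t, x (t + 1) = R t * x t * exp (-(a t) * y t)) : ∀ t, 0 < x t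
  | 0 => hx0
  | t + 1 => by
    have := hR t
    have := host_pos hR hx0 hx t
    rw [hx t]
    positivity

theorem immigration_le_parasitoid_succ {t : ℕ} (hxt : 0 ≤ x t) (hayt : 0 ≤ a t * y t)
    (hy : ∀ t, y (t + 1) = x t * (1 - exp (-(a t) * y t)) + I t) : I t ≤ y (t + 1) := by
  have hexp : exp (-(a t) * y t) ≤ 1 := exp_le_one_iff.mpr (by linarith [neg_mul (a t) (y t)])
  rw [hy t]
  nlinarith

theorem parasitoid_nonneg (ha : ∀ t, 0 ≤ a t) (hI : ∀ t, 0 ≤ I t) (hx : ∀ t, 0 ≤ x t)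
    (hy0 : 0 ≤ y 0) (hy : ∀ t, y (t + 1) = x t * (1 - exp (-(a t) * y t)) + I t) :
    ∀ t, 0 ≤ y t
  | 0 => hy0
  | t + 1 => (hI t).trans <| immigration_le_parasitoid_succ (hx t)
      (mul_nonneg (ha t) (parasitoid_nonneg ha hI hx hy0 hy t)) hy

theorem log_host_succ {t : ℕ} (hRt : 0 < R t) (hxt : 0 < x t)
    (hx : ∀ t, x (t + 1) = R t * x t * exp (-(a t) * y t)) :
    log (x (t + 1)) = log (x t) + (log (R t) - a t * y t) := by
  rw [hx t, log_mul (by positivity) (exp_ne_zero _), log_mul hRt.ne' hxt.ne', log_exp]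
  ring

theorem log_host_succ_le {t : ℕ} {z : ℝ} (hRt : 0 < R t) (hxt : 0 < x t) (hat : 0 ≤ a t)
    (hz : z ≤ y t) (hx : ∀ t, x (t + 1) = R t * x t * exp (-(a t) * y t)) :
    log (x (t + 1)) ≤ log (x t) + (log (R t) - a t * z) := by
  rw [log_host_succ hRt hxt hx]
  linarith [mul_le_mul_of_nonneg_left hz hat]

end HoltLawton

open HoltLawton in
/-- Along any solution of the single-host Holt–Lawton model with `x 0 > 0`,
`ln x (t+1) ≤ ln (Rmax * x 0) + ∑_{s=1}^{t} (ln (R s) - a s * I (s-1))` for all `t ≥ 1`. -/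
theorem log_host_pathwise_bound
    (x y : ℕ → ℝ) (R a I : ℕ → ℝ)
    (Rmin Rmax amin amax Imin Imax : ℝ)
    (hRmin : 0 < Rmin) (hamin : 0 < amin) (hImin : 0 < Imin)
    (hR : ∀ t, R t ∈ Set.Icc Rmin Rmax)
    (ha : ∀ t, a t ∈ Set.Icc amin amax)
    (hI : ∀ t, I t ∈ Set.Icc Imin Imax)
    (hx0 : 0 < x 0) (hy0 : 0 ≤ y 0)
    (hx : ∀ t, x (t + 1) = R t * x t * Real.exp (-(a t) * y t))
    (hy : ∀ t, y (t + 1) = x t * (1 - Real.exp (-(a t) * y t)) + I t) :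
    ∀ t, 1 ≤ t →
      Real.log (x (t + 1)) ≤
        Real.log (Rmax * x 0) +
          ∑ s ∈ Finset.Icc 1 t, (Real.log (R s) - a s * I (s - 1)) := by
  have hRpos (t : ℕ) : 0 < R t := hRmin.trans_le (hR t).1
  have hapos (t : ℕ) : 0 ≤ a t := hamin.le.trans (ha t).1
  have hxpos := host_pos hRpos hx0 hx
  have hypos := parasitoid_nonneg hapos (fun t => hImin.le.trans (hI t).1)
    (fun t => (hxpos t).le) hy0 hy
  have first : log (x 1) ≤ log (Rmax * x 0) := by
    have := log_host_succ_le (hRpos 0) hx0 (hapos 0) (hypos 0) hx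
    rw [log_mul ((hRpos 0).trans_le (hR 0).2).ne' hx0.ne']
    linarith [log_le_log (hRpos 0) (hR 0).2]
  have step : ∀ t, 1 ≤ t → log (x (t + 1)) ≤ log (x t) + (log (R t) - a t * I (t - 1))
    | s + 1, _ => log_host_succ_le (hRpos _) (hxpos _) (hapos _)
        (immigration_le_parasitoid_succ (hxpos s).le (mul_nonneg (hapos s) (hypos s)) hy) hx
  intro t _
  linarith [le_add_sum_Icc_of_succ_le (f := fun t => log (x t)) step t]
end

section
/- In the single-host stochastic Holt–Lawton model where (R_1(t), a_1(t), I(t)) for t = 0,1,2,… are i.i.d. with R_1(t) ∈ [R_min, R_max], a_1(t) ∈ [a_min, a_max], I(t) ∈ [I_min, I_max] (all lower bounds positive), if E[ln R_1(0)] < E[a_1(0)]·E[I(0)] and a_1(t) is independent of I(t-1), then for any initial condition with x_1(0) > 0 and y(0) ≥ 0, almost surely limsup_{t→∞} (1/t)·ln x_1(t) ≤ E[ln R_1(0)] - E[a_1(0)]·E[I(0)] < 0; in particular x_1(t) → 0 almost surely. -/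
/-!
Since `y (t + 1) ≥ I t`, the recursion gives
`log x (t + 1) ≤ log x 1 + ∑_{k < t} (log R (k + 1) - a (k + 1) * I k)`.
The summands form a stationary sequence in which terms two or more steps apart are
independent, so the strong law of large numbers applied separately to the even and the odd
terms shows that their averages converge a.s. to `E[log R 0] - E[a 0] E[I 0] < 0`. Hence
`log x t → -∞`, so `x t → 0`; then `y` is bounded and `log x t` decreases at most linearly,
which keeps `log x t / t` bounded below, as the real `limsup` requires.
-/

open MeasureTheory ProbabilityTheory Filter Finset Asymptotics Topology Real

theorem sum_range_eq_sum_even_add_sum_odd {M : Type*} [AddCommMonoid M] (W : ℕ → M) (n : ℕ) :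
    ∑ k ∈ range n, W k =
      ∑ i ∈ range (n - n / 2), W (2 * i) + ∑ i ∈ range (n / 2), W (2 * i + 1) := by
  induction n with
  | zero => simp
  | succ n ih =>
    rw [sum_range_succ, ih]
    obtain ⟨j, rfl | rfl⟩ := Nat.even_or_odd' n
    · rw [show 2 * j + 1 - (2 * j + 1) / 2 = j + 1 by omega, show (2 * j + 1) / 2 = j by omega,
        show 2 * j - 2 * j / 2 = j by omega, show 2 * j / 2 = j by omega, sum_range_succ]
      abel
    · rw [show 2 * j + 1 + 1 - (2 * j + 1 + 1) / 2 = j + 1 by omega,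
        show (2 * j + 1 + 1) / 2 = j + 1 by omega,
        show 2 * j + 1 - (2 * j + 1) / 2 = j + 1 by omega, show (2 * j + 1) / 2 = j by omega,
        sum_range_succ (fun i ↦ W (2 * i + 1)) j]
      abel

theorem isLittleO_sub_mul_iff_tendsto_div {u : ℕ → ℝ} {m : ℝ} :
    (fun n ↦ u n - n * m) =o[atTop] (fun n ↦ (n : ℝ)) ↔
      Tendsto (fun n ↦ u n / n) atTop (𝓝 m) := by
  have hne : ∀ᶠ n : ℕ in atTop, (n : ℝ) ≠ 0 :=
    (eventually_ne_atTop 0).mono fun n hn ↦ Nat.cast_ne_zero.2 hn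
  rw [isLittleO_iff_tendsto' (hne.mono fun n hn h ↦ absurd h hn),
    ← tendsto_sub_const_iff m (f := fun n : ℕ ↦ u n / n), sub_self]
  refine tendsto_congr' (hne.mono fun n hn ↦ ?_)
  field_simp

theorem tendsto_sum_range_div_of_even_of_odd {W : ℕ → ℝ} {m : ℝ}
    (heven : Tendsto (fun n ↦ (∑ i ∈ range n, W (2 * i)) / n) atTop (𝓝 m))
    (hodd : Tendsto (fun n ↦ (∑ i ∈ range n, W (2 * i + 1)) / n) atTop (𝓝 m)) :
    Tendsto (fun n ↦ (∑ k ∈ range n, W k) / n) atTop (𝓝 m) := by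
  have hcast_le : ∀ c : ℕ → ℕ, (∀ n, c n ≤ n) →
      (fun n ↦ (c n : ℝ)) =O[atTop] (fun n ↦ (n : ℝ)) := fun c hc ↦
    IsBigO.of_bound 1 (Eventually.of_forall fun n ↦ by simpa using hc n)
  have hhalf : Tendsto (· / 2) atTop atTop := Nat.tendsto_div_const_atTop two_ne_zero
  have hrest : Tendsto (fun n ↦ n - n / 2) atTop atTop :=
    tendsto_atTop_mono (fun n ↦ by omega) hhalf
  have := (((isLittleO_sub_mul_iff_tendsto_div.2 heven).comp_tendsto hrest).trans_isBigO
    (hcast_le _ fun n ↦ Nat.sub_le n _)).add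
    (((isLittleO_sub_mul_iff_tendsto_div.2 hodd).comp_tendsto hhalf).trans_isBigO
    (hcast_le _ fun n ↦ Nat.div_le_self n 2))
  refine isLittleO_sub_mul_iff_tendsto_div.1 (this.congr_left fun n ↦ ?_)
  simp only [Function.comp_apply, sum_range_eq_sum_even_add_sum_odd W n]
  rw [Nat.cast_sub (Nat.div_le_self n 2)]
  ring

section StrongLaw

variable {Ω : Type*} [MeasurableSpace Ω] {μ : Measure Ω}

theorem strong_law_ae_of_indepFun_of_add_two_le (X : ℕ → Ω → ℝ)
    (hint : Integrable (X 0) μ) (hindep : ∀ i j, i + 2 ≤ j → X i ⟂ᵢ[μ] X j)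
    (hident : ∀ i, IdentDistrib (X i) (X 0) μ μ) :
    ∀ᵐ ω ∂μ, Tendsto (fun n : ℕ ↦ (∑ k ∈ range n, X k ω) / n) atTop (𝓝 μ[X 0]) := by
  have hresidue : ∀ c, ∀ᵐ ω ∂μ,
      Tendsto (fun n : ℕ ↦ (∑ i ∈ range n, X (c + 2 * i) ω) / n) atTop (𝓝 μ[X 0]) := by
    intro c
    have hpair : Pairwise fun i j ↦ X (c + 2 * i) ⟂ᵢ[μ] X (c + 2 * j) := by
      intro i j hij
      rcases Nat.lt_or_gt_of_ne hij with hlt | hlt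
      · exact hindep _ _ (by omega)
      · exact (hindep _ _ (by omega)).symm
    rw [← (hident c).integral_eq]
    exact strong_law_ae_real (fun i ↦ X (c + 2 * i)) ((hident c).integrable_iff.2 hint) hpair
      fun i ↦ (hident _).trans (hident c).symm
  filter_upwards [hresidue 0, hresidue 1] with ω heven hodd
  simp only [zero_add] at heven
  simp only [add_comm 1] at hodd
  exact tendsto_sum_range_div_of_even_of_odd heven hodd

variable {β : Type*} [MeasurableSpace β] [IsProbabilityMeasure μ]

theorem strong_law_ae_comp_succ_prodMk (v : ℕ → Ω → β) (hmeas : ∀ t, Measurable (v t))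
    (hindep : iIndepFun v μ) (hident : ∀ t, IdentDistrib (v t) (v 0) μ μ) {g : β × β → ℝ}
    (hg : Measurable g) (hint : Integrable (fun ω ↦ g (v 1 ω, v 0 ω)) μ) :
    ∀ᵐ ω ∂μ, Tendsto (fun n : ℕ ↦ (∑ k ∈ range n, g (v (k + 1) ω, v k ω)) / n) atTop
      (𝓝 (∫ ω, g (v 1 ω, v 0 ω) ∂μ)) := by
  have hident' : ∀ i j, IdentDistrib (v i) (v j) μ μ :=
    fun i j ↦ (hident i).trans (hident j).symm
  refine strong_law_ae_of_indepFun_of_add_two_le (fun k ω ↦ g (v (k + 1) ω, v k ω)) hint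
    (fun i j hij ↦ ?_) fun k ↦ ?_
  · exact (hindep.indepFun_prodMk_prodMk hmeas (i + 1) i (j + 1) j (by omega) (by omega)
      (by omega) (by omega)).comp hg hg
  · exact ((hident' (k + 1) 1).prodMk (hident' k 0) (hindep.indepFun (by omega))
      (hindep.indepFun one_ne_zero)).comp hg

end StrongLaw

structure IsHoltLawtonOrbit (R a I x y : ℕ → ℝ) : Prop where
  R_pos : ∀ t, 0 < R t
  a_nonneg : ∀ t, 0 ≤ a t
  I_nonneg : ∀ t, 0 ≤ I t
  x_zero_pos : 0 < x 0
  y_zero_nonneg : 0 ≤ y 0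
  x_succ : ∀ t, x (t + 1) = R t * x t * exp (-a t * y t)
  y_succ : ∀ t, y (t + 1) = x t * (1 - exp (-a t * y t)) + I t

-- Bounds the increment `log x (k + 2) - log x (k + 1)` from above, via `y (k + 1) ≥ I k`.
noncomputable def logGrowthBound (R a I : ℕ → ℝ) (k : ℕ) : ℝ :=
  log (R (k + 1)) - a (k + 1) * I k

namespace IsHoltLawtonOrbit

variable {R a I x y : ℕ → ℝ}

theorem x_pos (h : IsHoltLawtonOrbit R a I x y) : ∀ t, 0 < x t
  | 0 => h.x_zero_pos
  | t + 1 => by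
    rw [h.x_succ]
    exact mul_pos (mul_pos (h.R_pos t) (h.x_pos t)) (exp_pos _)

theorem I_le_y_succ_of_nonneg (h : IsHoltLawtonOrbit R a I x y) {t : ℕ} (hy : 0 ≤ y t) :
    I t ≤ y (t + 1) := by
  have hexp : exp (-a t * y t) ≤ 1 :=
    exp_le_one_iff.2 (mul_nonpos_of_nonpos_of_nonneg (neg_nonpos.2 (h.a_nonneg t)) hy)
  rw [h.y_succ]
  linarith [mul_nonneg (h.x_pos t).le (sub_nonneg.2 hexp)]

theorem y_nonneg (h : IsHoltLawtonOrbit R a I x y) : ∀ t, 0 ≤ y t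
  | 0 => h.y_zero_nonneg
  | t + 1 => (h.I_nonneg t).trans (h.I_le_y_succ_of_nonneg (h.y_nonneg t))

theorem I_le_y_succ (h : IsHoltLawtonOrbit R a I x y) (t : ℕ) : I t ≤ y (t + 1) :=
  h.I_le_y_succ_of_nonneg (h.y_nonneg t)

theorem log_x_succ (h : IsHoltLawtonOrbit R a I x y) (t : ℕ) :
    log (x (t + 1)) = log (x t) + log (R t) - a t * y t := by
  rw [h.x_succ, log_mul (mul_pos (h.R_pos t) (h.x_pos t)).ne' (exp_pos _).ne',
    log_mul (h.R_pos t).ne' (h.x_pos t).ne', log_exp]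
  ring

theorem log_x_succ_le (h : IsHoltLawtonOrbit R a I x y) (t : ℕ) :
    log (x (t + 1)) ≤ log (x 1) + ∑ k ∈ range t, logGrowthBound R a I k := by
  induction t with
  | zero => simp
  | succ t ih =>
    have hay : a (t + 1) * I t ≤ a (t + 1) * y (t + 1) :=
      mul_le_mul_of_nonneg_left (h.I_le_y_succ t) (h.a_nonneg _)
    rw [h.log_x_succ, sum_range_succ, logGrowthBound]
    linarith

theorem tendsto_x_zero (h : IsHoltLawtonOrbit R a I x y) {m : ℝ} (hm : m < 0)
    (hS : Tendsto (fun n : ℕ ↦ (∑ k ∈ range n, logGrowthBound R a I k) / n) atTop (𝓝 m)) :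
    Tendsto x atTop (𝓝 0) := by
  have hsum : Tendsto (fun n ↦ ∑ k ∈ range n, logGrowthBound R a I k) atTop atBot := by
    refine (hS.neg_mul_atTop hm tendsto_natCast_atTop_atTop).congr' ?_
    filter_upwards [eventually_ne_atTop 0] with n hn
    field_simp
  have hlog : Tendsto (fun t ↦ log (x (t + 1))) atTop atBot :=
    tendsto_atBot_mono h.log_x_succ_le (tendsto_atBot_add_const_left _ _ hsum)
  rw [← tendsto_add_atTop_iff_nat 1]
  exact (tendsto_exp_atBot.comp hlog).congr fun t ↦ exp_log (h.x_pos _)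

theorem exists_log_x_succ_ge (h : IsHoltLawtonOrbit R a I x y) {c A J : ℝ}
    (hR : ∀ t, c ≤ log (R t)) (ha : ∀ t, a t ≤ A) (hI : ∀ t, I t ≤ J)
    (hx : Tendsto x atTop (𝓝 0)) :
    ∃ K, ∀ t : ℕ, log (x 1) - K * t ≤ log (x (t + 1)) := by
  obtain ⟨B, hB⟩ := hx.bddAbove_range
  have hy : ∀ t, y (t + 1) ≤ B + J := fun t ↦ by
    have hxy : x t * (1 - exp (-a t * y t)) ≤ x t :=
      mul_le_of_le_one_right (h.x_pos t).le (by linarith [exp_pos (-a t * y t)])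
    rw [h.y_succ]
    linarith [hB (Set.mem_range_self t), hI t]
  refine ⟨A * (B + J) - c, fun t ↦ ?_⟩
  induction t with
  | zero => simp
  | succ t ih =>
    have hay : a (t + 1) * y (t + 1) ≤ A * (B + J) :=
      mul_le_mul (ha _) (hy t) (h.y_nonneg _) ((h.a_nonneg (t + 1)).trans (ha _))
    rw [h.log_x_succ (t + 1)]
    push_cast
    linarith [hR (t + 1)]

theorem limsup_log_x_div_le (h : IsHoltLawtonOrbit R a I x y) {c A J m : ℝ}
    (hR : ∀ t, c ≤ log (R t)) (ha : ∀ t, a t ≤ A) (hI : ∀ t, I t ≤ J) (hm : m < 0)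
    (hS : Tendsto (fun n : ℕ ↦ (∑ k ∈ range n, logGrowthBound R a I k) / n) atTop (𝓝 m)) :
    limsup (fun t : ℕ ↦ log (x t) / t) atTop ≤ m := by
  obtain ⟨K, hK⟩ := h.exists_log_x_succ_ge hR ha hI (h.tendsto_x_zero hm hS)
  set L := log (x 1)
  have hupper : Tendsto (fun t : ℕ ↦ (L + ∑ k ∈ range t, logGrowthBound R a I k) / (t + 1 : ℕ))
      atTop (𝓝 m) := by
    have hL := (tendsto_add_atTop_iff_nat 1).2 (tendsto_const_div_atTop_nhds_zero_nat L)
    have hratio := hS.mul (tendsto_natCast_div_add_atTop (1 : ℝ))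
    rw [mul_one] at hratio
    refine (zero_add m ▸ hL.add hratio).congr' ?_
    filter_upwards [eventually_ne_atTop 0] with n hn
    push_cast
    field_simp
  have hlower : ∀ t : ℕ, -(|L| + |K|) ≤ log (x (t + 1)) / (t + 1 : ℕ) := fun t ↦ by
    rw [le_div_iff₀ (by positivity)]
    push_cast
    have ht : (0 : ℝ) ≤ t := t.cast_nonneg
    linarith [hK t, neg_abs_le L, abs_nonneg K, mul_nonneg (abs_nonneg L) ht,
      mul_le_mul_of_nonneg_right (le_abs_self K) ht]
  rw [← limsup_nat_add _ 1]
  calc limsup (fun t : ℕ ↦ log (x (t + 1)) / (t + 1 : ℕ)) atTop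
      ≤ limsup (fun t : ℕ ↦ (L + ∑ k ∈ range t, logGrowthBound R a I k) / (t + 1 : ℕ)) atTop :=
        limsup_le_limsup (Eventually.of_forall fun t ↦
          div_le_div_of_nonneg_right (h.log_x_succ_le t) (by positivity))
          (isCoboundedUnder_le_of_le atTop hlower) hupper.isBoundedUnder_le
    _ = m := hupper.limsup_eq

end IsHoltLawtonOrbit

theorem ae_tendsto_sum_logGrowthBound_div {Ω : Type*} [MeasurableSpace Ω] {P : Measure Ω}
    [IsProbabilityMeasure P] {R a I : ℕ → Ω → ℝ} (hmeasR : ∀ t, Measurable (R t))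
    (hmeasa : ∀ t, Measurable (a t)) (hmeasI : ∀ t, Measurable (I t))
    {Rmin Rmax amin amax Imin Imax : ℝ}
    (hRmin : 0 < Rmin) (hR : ∀ t ω, R t ω ∈ Set.Icc Rmin Rmax)
    (ha : ∀ t ω, a t ω ∈ Set.Icc amin amax) (hI : ∀ t ω, I t ω ∈ Set.Icc Imin Imax)
    (hindep : iIndepFun (fun t ω ↦ (R t ω, a t ω, I t ω)) P)
    (hident : ∀ t, IdentDistrib (fun ω ↦ (R t ω, a t ω, I t ω))
      (fun ω ↦ (R 0 ω, a 0 ω, I 0 ω)) P P) :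
    ∀ᵐ ω ∂P, Tendsto (fun n : ℕ ↦ (∑ k ∈ range n, logGrowthBound (R · ω) (a · ω) (I · ω) k) / n)
      atTop (𝓝 ((∫ ω, log (R 0 ω) ∂P) - (∫ ω, a 0 ω ∂P) * ∫ ω, I 0 ω ∂P)) := by
  have hmeas : ∀ t, Measurable fun ω ↦ (R t ω, a t ω, I t ω) :=
    fun t ↦ (hmeasR t).prodMk ((hmeasa t).prodMk (hmeasI t))
  have hg : Measurable fun p : (ℝ × ℝ × ℝ) × (ℝ × ℝ × ℝ) ↦ log p.1.1 - p.1.2.1 * p.2.2.2 :=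
    (measurable_log.comp measurable_fst.fst).sub (measurable_fst.snd.fst.mul measurable_snd.snd.snd)
  have haI : a 1 ⟂ᵢ[P] I 0 :=
    (hindep.indepFun one_ne_zero).comp measurable_snd.fst measurable_snd.snd
  have hlogR : Integrable (fun ω ↦ log (R 1 ω)) P :=
    .of_mem_Icc (log Rmin) (log Rmax) (measurable_log.comp (hmeasR 1)).aemeasurable
      (ae_of_all _ fun ω ↦ ⟨log_le_log hRmin (hR 1 ω).1,
        log_le_log (hRmin.trans_le (hR 1 ω).1) (hR 1 ω).2⟩)
  have hprod : Integrable (fun ω ↦ a 1 ω * I 0 ω) P :=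
    haI.integrable_mul (.of_mem_Icc amin amax (hmeasa 1).aemeasurable (ae_of_all _ (ha 1)))
      (.of_mem_Icc Imin Imax (hmeasI 0).aemeasurable (ae_of_all _ (hI 0)))
  have hmean : ∫ ω, (log (R 1 ω) - a 1 ω * I 0 ω) ∂P
      = (∫ ω, log (R 0 ω) ∂P) - (∫ ω, a 0 ω ∂P) * ∫ ω, I 0 ω ∂P := by
    have hmul := haI.integral_mul_eq_mul_integral (hmeasa 1).aestronglyMeasurable
      (hmeasI 0).aestronglyMeasurable
    simp only [Pi.mul_apply] at hmul
    have hlog_eq : ∫ ω, log (R 1 ω) ∂P = ∫ ω, log (R 0 ω) ∂P :=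
      ((hident 1).comp (measurable_log.comp measurable_fst)).integral_eq
    have ha_eq : ∫ ω, a 1 ω ∂P = ∫ ω, a 0 ω ∂P := ((hident 1).comp measurable_snd.fst).integral_eq
    rw [integral_sub hlogR hprod, hmul, hlog_eq, ha_eq]
  have hint : Integrable (fun ω ↦ log (R 1 ω) - a 1 ω * I 0 ω) P := hlogR.sub hprod
  rw [← hmean]
  exact (strong_law_ae_comp_succ_prodMk _ hmeas hindep hident hg hint :)

theorem single_host_extinction_general
    {Ω : Type*} [MeasurableSpace Ω] (P : Measure Ω) [IsProbabilityMeasure P]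
    (R a I : ℕ → Ω → ℝ)
    (hmeasR : ∀ t, Measurable (R t)) (hmeasa : ∀ t, Measurable (a t))
    (hmeasI : ∀ t, Measurable (I t))
    (Rmin Rmax amin amax Imin Imax : ℝ)
    (hRmin : 0 < Rmin) (hamin : 0 < amin) (hImin : 0 < Imin)
    (hR : ∀ t ω, R t ω ∈ Set.Icc Rmin Rmax)
    (ha : ∀ t ω, a t ω ∈ Set.Icc amin amax)
    (hI : ∀ t ω, I t ω ∈ Set.Icc Imin Imax)
    (hindep : iIndepFun
      (fun t ω => (R t ω, a t ω, I t ω)) P)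
    (hident : ∀ t, IdentDistrib (fun ω => (R t ω, a t ω, I t ω))
      (fun ω => (R 0 ω, a 0 ω, I 0 ω)) P P)
    (hmean : ∫ ω, Real.log (R 0 ω) ∂P < (∫ ω, a 0 ω ∂P) * ∫ ω, I 0 ω ∂P)
    (x y : ℕ → Ω → ℝ)
    (hx0 : ∀ ω, 0 < x 0 ω) (hy0 : ∀ ω, 0 ≤ y 0 ω)
    (hx : ∀ t ω, x (t + 1) ω = R t ω * x t ω * Real.exp (-(a t ω) * y t ω))
    (hy : ∀ t ω, y (t + 1) ω =
      x t ω * (1 - Real.exp (-(a t ω) * y t ω)) + I t ω) :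
    ∀ᵐ ω ∂P,
      (limsup (fun t : ℕ => Real.log (x t ω) / t) atTop ≤
        (∫ ω', Real.log (R 0 ω') ∂P) - (∫ ω', a 0 ω' ∂P) * ∫ ω', I 0 ω' ∂P) ∧
      ((∫ ω', Real.log (R 0 ω') ∂P) - (∫ ω', a 0 ω' ∂P) * ∫ ω', I 0 ω' ∂P < 0) ∧
      Tendsto (fun t => x t ω) atTop (nhds 0) := by
  have hm := sub_neg.2 hmean
  filter_upwards [ae_tendsto_sum_logGrowthBound_div hmeasR hmeasa hmeasI hRmin hR ha hI hindep
    hident] with ω hω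
  have horbit : IsHoltLawtonOrbit (R · ω) (a · ω) (I · ω) (x · ω) (y · ω) :=
    { R_pos := fun t ↦ hRmin.trans_le (hR t ω).1
      a_nonneg := fun t ↦ hamin.le.trans (ha t ω).1
      I_nonneg := fun t ↦ hImin.le.trans (hI t ω).1
      x_zero_pos := hx0 ω
      y_zero_nonneg := hy0 ω
      x_succ := fun t ↦ hx t ω
      y_succ := fun t ↦ hy t ω }
  exact ⟨horbit.limsup_log_x_div_le (fun t ↦ log_le_log hRmin (hR t ω).1) (fun t ↦ (ha t ω).2)
    (fun t ↦ (hI t ω).2) hm hω, hm, horbit.tendsto_x_zero hm hω⟩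

/-- Extinction part of Theorem 1: in the single-host stochastic Holt–Lawton model
with i.i.d. bounded coefficients, if `E[ln R 0] < E[a 0] * E[I 0]` and `a t` is
independent of `I (t-1)`, then for any initial condition with `x 0 > 0`, `y 0 ≥ 0`,
almost surely `limsup (1/t) ln x t ≤ E[ln R 0] - E[a 0]·E[I 0] < 0` and `x t → 0`. -/
theorem single_host_extinction
    {Ω : Type*} [MeasurableSpace Ω] (P : Measure Ω) [IsProbabilityMeasure P]
    (R a I : ℕ → Ω → ℝ)
    (hmeasR : ∀ t, Measurable (R t)) (hmeasa : ∀ t, Measurable (a t))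
    (hmeasI : ∀ t, Measurable (I t))
    (Rmin Rmax amin amax Imin Imax : ℝ)
    (hRmin : 0 < Rmin) (hamin : 0 < amin) (hImin : 0 < Imin)
    (hR : ∀ t ω, R t ω ∈ Set.Icc Rmin Rmax)
    (ha : ∀ t ω, a t ω ∈ Set.Icc amin amax)
    (hI : ∀ t ω, I t ω ∈ Set.Icc Imin Imax)
    (hindep : iIndepFun
      (fun t ω => (R t ω, a t ω, I t ω)) P)
    (hident : ∀ t, IdentDistrib (fun ω => (R t ω, a t ω, I t ω))
      (fun ω => (R 0 ω, a 0 ω, I 0 ω)) P P)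
    (haIindep : ∀ t, 1 ≤ t → IndepFun (a t) (I (t - 1)) P)
    (hmean : ∫ ω, Real.log (R 0 ω) ∂P < (∫ ω, a 0 ω ∂P) * ∫ ω, I 0 ω ∂P)
    (x y : ℕ → Ω → ℝ)
    (hx0 : ∀ ω, 0 < x 0 ω) (hy0 : ∀ ω, 0 ≤ y 0 ω)
    (hx : ∀ t ω, x (t + 1) ω = R t ω * x t ω * Real.exp (-(a t ω) * y t ω))
    (hy : ∀ t ω, y (t + 1) ω =
      x t ω * (1 - Real.exp (-(a t ω) * y t ω)) + I t ω) :
    ∀ᵐ ω ∂P,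
      (limsup (fun t : ℕ => Real.log (x t ω) / t) atTop ≤
        (∫ ω', Real.log (R 0 ω') ∂P) - (∫ ω', a 0 ω' ∂P) * ∫ ω', I 0 ω' ∂P) ∧
      ((∫ ω', Real.log (R 0 ω') ∂P) - (∫ ω', a 0 ω' ∂P) * ∫ ω', I 0 ω' ∂P < 0) ∧
      Tendsto (fun t => x t ω) atTop (nhds 0) :=
  single_host_extinction_general P R a I hmeasR hmeasa hmeasI Rmin Rmax amin amax Imin Imax hRmin
    hamin hImin hR ha hI hindep hident hmean x y hx0 hy0 hx hy
end

section
/- Let μ be an ergodic invariant probability measure for a Markov chain of the form u(t+1) = u(t)·f(u(t), v(t), ξ(t)), v(t+1) = G(u(t), v(t), ξ(t)) on a compact set S, with sup |log f| < ∞, such that μ({(u,v) : u > 0}) = 1. Then ∫_S E[log f(z, ξ)] μ(dz) = 0. -/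
/-!
Along the chain, `log u(t+1) - log u(t) = log f(z(t), ξ(t))`, so the realized growth rate is the
mean increment of `log u` under the invariant measure, and the mean increment of an integrable
function vanishes by invariance. Since `S` is compact, `log u` is bounded above on `S`, but it need
not be integrable near `u = 0`; its truncations `max (log u) (-M)` are, and their increments
converge boundedly to `log f` as `M → ∞`.
-/

open MeasureTheory Filter Function Topology

lemma MeasureTheory.MeasurePreserving.integral_comp_of_aestronglyMeasurable
    {α β E : Type*} [MeasurableSpace α] [MeasurableSpace β] [NormedAddCommGroup E]
    [NormedSpace ℝ E] {μ : Measure α} {ν : Measure β} {f : α → β}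
    (hf : MeasurePreserving f μ ν) {g : β → E} (hg : AEStronglyMeasurable g ν) :
    ∫ x, g (f x) ∂μ = ∫ y, g y ∂ν := by
  rw [← hf.map_eq] at hg ⊢
  exact (integral_map hf.measurable.aemeasurable hg).symm

namespace MeasureTheory

variable {α Ξ : Type*} [MeasurableSpace α] [MeasurableSpace Ξ] {μ : Measure α} {ν : Measure Ξ}
  {T : α → Ξ → α}

lemma Measure.bind_map_eq_map_prod [SFinite ν] (hT : Measurable (uncurry T)) :
    μ.bind (fun z => ν.map (T z)) = (μ.prod ν).map (uncurry T) := by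
  have hmap : (fun z => ν.map (T z)) = Measure.map (uncurry T) ∘ fun z => ν.map (Prod.mk z) := by
    funext z
    rw [comp_apply, Measure.map_map hT measurable_prodMk_left]
    rfl
  rw [hmap, Measure.bind, ← Measure.map_map (Measure.measurable_map _ hT)
    Measurable.map_prodMk_left, Measure.join_map_map hT, Measure.prod, Measure.bind]

lemma measurePreserving_uncurry_of_bind_eq [SFinite ν] (hT : Measurable (uncurry T))
    (hμ : μ.bind (fun z => ν.map (T z)) = μ) : MeasurePreserving (uncurry T) (μ.prod ν) μ :=
  ⟨hT, by rw [← Measure.bind_map_eq_map_prod hT, hμ]⟩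

lemma integral_integral_sub_comp_eq_zero [SFinite μ] [IsProbabilityMeasure ν]
    (hT : Measurable (uncurry T)) (hμ : μ.bind (fun z => ν.map (T z)) = μ)
    {E : Type*} [NormedAddCommGroup E] [NormedSpace ℝ E] {φ : α → E} (hφ : Integrable φ μ) :
    ∫ z, ∫ ξ, (φ (T z ξ) - φ z) ∂ν ∂μ = 0 := by
  have hT' := measurePreserving_uncurry_of_bind_eq hT hμ
  have hfst : MeasurePreserving Prod.fst (μ.prod ν) μ := measurePreserving_fst
  have hφT := (hT'.integrable_comp hφ.1).2 hφ
  have hφfst := (hfst.integrable_comp hφ.1).2 hφ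
  calc ∫ z, ∫ ξ, (φ (T z ξ) - φ z) ∂ν ∂μ
      = ∫ p, φ (uncurry T p) ∂(μ.prod ν) - ∫ p, φ p.1 ∂(μ.prod ν) :=
        (integral_prod _ (hφT.sub hφfst)).symm.trans (integral_sub hφT hφfst)
    _ = 0 := by
        rw [hT'.integral_comp_of_aestronglyMeasurable hφ.1,
          hfst.integral_comp_of_aestronglyMeasurable hφ.1, sub_self]

theorem integral_integral_eq_zero_of_coboundary [IsFiniteMeasure μ] [IsProbabilityMeasure ν]
    (hT : Measurable (uncurry T)) (hμ : μ.bind (fun z => ν.map (T z)) = μ)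
    {h : α → ℝ} (hh : Measurable h) {K : ℝ} (hK : ∀ z, h z ≤ K)
    {g : α → Ξ → ℝ} {C : ℝ} (hgC : ∀ z ξ, |g z ξ| ≤ C)
    (hcob : ∀ᵐ z ∂μ, ∀ ξ, h (T z ξ) = h z + g z ξ) :
    ∫ z, ∫ ξ, g z ξ ∂ν ∂μ = 0 := by
  set φ : ℕ → α → ℝ := fun M z => max (h z) (-M)
  have hφ : ∀ M, Integrable (φ M) μ := fun M =>
    Integrable.of_mem_Icc (-M) (max K (-M)) (by fun_prop)
      (ae_of_all _ fun z => ⟨le_max_right _ _, max_le_max_right _ (hK z)⟩)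
  have hlim : Tendsto (fun M : ℕ => ∫ z, ∫ ξ, (φ M (T z ξ) - φ M z) ∂ν ∂μ) atTop
      (𝓝 (∫ z, ∫ ξ, g z ξ ∂ν ∂μ)) := by
    refine tendsto_integral_of_dominated_convergence (fun _ => C) (fun M => ?_)
      (integrable_const C) (fun M => ?_) ?_
    · have : Measurable fun p : α × Ξ => φ M (uncurry T p) - φ M p.1 := by fun_prop
      exact this.stronglyMeasurable.integral_prod_right'.aestronglyMeasurable
    · filter_upwards [hcob] with z hz
      refine (norm_integral_le_of_norm_le_const (C := C) (ae_of_all _ fun ξ => ?_)).trans_eq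
        (by simp)
      simp only [Real.norm_eq_abs, φ, hz ξ]
      exact (abs_max_sub_max_le_abs _ _ _).trans (by simpa using hgC z ξ)
    · filter_upwards [hcob] with z hz
      refine tendsto_atTop_of_eventually_const (i₀ := ⌈C - h z⌉₊) fun M hM => ?_
      refine integral_congr_ae (ae_of_all _ fun ξ => ?_)
      have hM : C - h z ≤ M := (Nat.le_ceil _).trans (Nat.cast_le.2 hM)
      have hg := (abs_le.1 (hgC z ξ)).1
      have hC : 0 ≤ C := (abs_nonneg _).trans (hgC z ξ)
      simp only [φ, hz ξ]
      rw [max_eq_left (by linarith), max_eq_left (by linarith)]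
      ring
  have hzero : ∀ M, ∫ z, ∫ ξ, (φ M (T z ξ) - φ M z) ∂ν ∂μ = 0 := fun M =>
    integral_integral_sub_comp_eq_zero hT hμ (hφ M)
  simp only [hzero] at hlim
  exact tendsto_nhds_unique hlim tendsto_const_nhds

end MeasureTheory

theorem realized_growth_rate_zero_general
    {Ξ : Type*} [MeasurableSpace Ξ] (ν : Measure Ξ) [IsProbabilityMeasure ν]
    (m : ℕ)
    (f : ℝ × (Fin m → ℝ) → Ξ → ℝ) (G : ℝ × (Fin m → ℝ) → Ξ → Fin m → ℝ)
    (hfmeas : Measurable (Function.uncurry f))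
    (hGmeas : Measurable (Function.uncurry G))
    (hfpos : ∀ z ξ, 0 < f z ξ)
    (C : ℝ) (hfbdd : ∀ z ξ, |Real.log (f z ξ)| ≤ C)
    (S : Set (ℝ × (Fin m → ℝ))) (hScompact : IsCompact S)
    (hSinv : ∀ z ∈ S, ∀ ξ, (z.1 * f z ξ, G z ξ) ∈ S)
    (μ : Measure (ℝ × (Fin m → ℝ))) [IsProbabilityMeasure μ]
    (hinv : μ.bind (fun z => ν.map (fun ξ => (z.1 * f z ξ, G z ξ))) = μ)
    (hμS : μ S = 1)
    (hpos : μ {z | 0 < z.1} = 1) :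
    ∫ z, (∫ ξ, Real.log (f z ξ) ∂ν) ∂μ = 0 := by
  obtain ⟨B, hB⟩ : BddAbove (Prod.fst '' S) := (hScompact.image continuous_fst).bddAbove
  have hlog_le : ∀ z ∈ S, 0 < z.1 → Real.log z.1 ≤ Real.log B := fun z hz hz0 =>
    Real.log_le_log hz0 (hB ⟨z, hz, rfl⟩)
  have hS : ∀ᵐ z ∂μ, z ∈ S := (mem_ae_iff_prob_eq_one hScompact.measurableSet).2 hμS
  have hu : ∀ᵐ z ∂μ, 0 < z.1 :=
    (mem_ae_iff_prob_eq_one (measurableSet_lt measurable_const measurable_fst)).2 hpos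
  -- Truncating at `log B` makes `h` bounded above everywhere, not only on `S ∩ {u > 0}`.
  refine integral_integral_eq_zero_of_coboundary (h := fun z => min (Real.log z.1) (Real.log B))
    ((measurable_fst.fst.mul hfmeas).prodMk hGmeas) hinv (by fun_prop)
    (fun _ => min_le_right _ _) hfbdd ?_
  filter_upwards [hS, hu] with z hzS hzu ξ
  have hfξ := hfpos z ξ
  rw [min_eq_left (hlog_le _ (hSinv z hzS ξ) (mul_pos hzu hfξ)), min_eq_left (hlog_le z hzS hzu),
    Real.log_mul hzu.ne' hfξ.ne']

/-- Proposition 2 (one species): for an ergodic invariant probability measure `μ`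
of the Markov chain `u' = u·f(u,v,ξ)`, `v' = G(u,v,ξ)` on a compact forward
invariant set `S ⊆ [0,∞) × ℝᵐ`, with `sup |log f| < ∞` and `μ({u > 0}) = 1`,
the realized per-capita growth rate `∫ E[log f(z, ξ)] μ(dz)` equals `0`. -/
theorem realized_growth_rate_zero
    {Ξ : Type*} [MeasurableSpace Ξ] (ν : Measure Ξ) [IsProbabilityMeasure ν]
    (m : ℕ)
    (f : ℝ × (Fin m → ℝ) → Ξ → ℝ) (G : ℝ × (Fin m → ℝ) → Ξ → Fin m → ℝ)
    (hfcont : ∀ ξ, Continuous (fun z => f z ξ))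
    (hfmeas : Measurable (Function.uncurry f))
    (hGcont : ∀ ξ, Continuous (fun z => G z ξ))
    (hGmeas : Measurable (Function.uncurry G))
    (hfpos : ∀ z ξ, 0 < f z ξ)
    (C : ℝ) (hfbdd : ∀ z ξ, |Real.log (f z ξ)| ≤ C)
    (S : Set (ℝ × (Fin m → ℝ))) (hScompact : IsCompact S)
    (hSsub : ∀ z ∈ S, 0 ≤ z.1)
    (hSinv : ∀ z ∈ S, ∀ ξ, (z.1 * f z ξ, G z ξ) ∈ S)
    (μ : Measure (ℝ × (Fin m → ℝ))) [IsProbabilityMeasure μ]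
    (hinv : μ.bind (fun z => ν.map (fun ξ => (z.1 * f z ξ, G z ξ))) = μ)
    (hergodic : ∀ A : Set (ℝ × (Fin m → ℝ)), MeasurableSet A →
      (∀ᵐ z ∂μ, z ∈ A → ∀ᵐ ξ ∂ν, (z.1 * f z ξ, G z ξ) ∈ A) →
      μ A = 0 ∨ μ A = 1)
    (hμS : μ S = 1)
    (hpos : μ {z | 0 < z.1} = 1) :
    ∫ z, (∫ ξ, Real.log (f z ξ) ∂ν) ∂μ = 0 :=
  realized_growth_rate_zero_general ν m f G hfmeas hGmeas hfpos C hfbdd S hScompact hSinv μ hinv hμS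
    hpos
end

section
/- Let μ be an ergodic invariant probability measure for the k-host Holt–Lawton chain supported on the set where x_1 = 0 and x_i > 0 for some fixed i ≥ 2 (and with r_i(μ) = 0 from Proposition 2). Then ∫ y μ(dx, dy) = E[ln R_i]/E[a_i], and consequently the external Lyapunov exponent of host 1 equals r_1(μ) = E[ln R_1] - E[a_1]·(E[ln R_i]/E[a_i]) = E[a_1]·(P_1* - P_i*). -/
open MeasureTheory ProbabilityTheory

/-! Both coefficients are bounded, so `ln R j` and `a j` are integrable and the realized growth
rate of host `j` is affine in the mean parasitoid density: `r_j(μ) = E[ln R j] - E[a j] · ∫ y dμ`.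
Since `E[a i] ≥ amin > 0`, the equation `r_i(μ) = 0` determines `∫ y dμ = P_i*`, and substituting
this into `r_1(μ)` gives both closed forms. -/

section GrowthRate

variable {Ω X : Type*} [MeasurableSpace Ω] [MeasurableSpace X] {P : Measure Ω} {μ : Measure X}
  {L A : Ω → ℝ}

lemma integrable_log_of_mem_Icc [IsFiniteMeasure P] {R : Ω → ℝ} (hR : Measurable R)
    {m M : ℝ} (hm : 0 < m) (hRmM : ∀ ω, R ω ∈ Set.Icc m M) :
    Integrable (fun ω => Real.log (R ω)) P :=
  .of_mem_Icc (Real.log m) (Real.log M) hR.log.aemeasurable <| ae_of_all _ fun ω =>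
    ⟨Real.log_le_log hm (hRmM ω).1,
      Real.log_le_log (hm.trans_le (hRmM ω).1) (hRmM ω).2⟩

lemma integral_pos_of_forall_mem_Icc [IsProbabilityMeasure P] (hA : Measurable A)
    {m M : ℝ} (hm : 0 < m) (hAmM : ∀ ω, A ω ∈ Set.Icc m M) :
    0 < ∫ ω, A ω ∂P := by
  have hint : Integrable A P := .of_mem_Icc m M hA.aemeasurable (ae_of_all _ hAmM)
  have hle : m ≤ ∫ ω, A ω ∂P := by
    simpa using integral_mono (integrable_const m) hint fun ω => (hAmM ω).1
  exact hm.trans_le hle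

lemma integral_sub_mul_const (hL : Integrable L P) (hA : Integrable A P) (y : ℝ) :
    ∫ ω, (L ω - A ω * y) ∂P = (∫ ω, L ω ∂P) - (∫ ω, A ω ∂P) * y := by
  rw [integral_sub hL (hA.mul_const y), integral_mul_const]

lemma integral_integral_sub_mul [IsProbabilityMeasure μ] (hL : Integrable L P)
    (hA : Integrable A P) {g : X → ℝ} (hg : Integrable g μ) :
    ∫ x, (∫ ω, (L ω - A ω * g x) ∂P) ∂μ = (∫ ω, L ω ∂P) - (∫ ω, A ω ∂P) * ∫ x, g x ∂μ := by
  simp_rw [integral_sub_mul_const hL hA]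
  rw [integral_sub (integrable_const _) (hg.const_mul _), integral_const_mul]
  simp

end GrowthRate

lemma integrable_snd_of_prob_mem_Icc {X : Type*} [MeasurableSpace X] {μ : Measure (X × ℝ)}
    [IsProbabilityMeasure μ] {Y : ℝ} (hY : μ {z | z.2 ∈ Set.Icc 0 Y} = 1) :
    Integrable (fun z : X × ℝ => z.2) μ :=
  .of_mem_Icc 0 Y measurable_snd.aemeasurable <|
    (mem_ae_iff_prob_eq_one (measurable_snd measurableSet_Icc)).2 hY

theorem external_lyapunov_host_one_general
    {Ω : Type*} [MeasurableSpace Ω] (P : Measure Ω) [IsProbabilityMeasure P]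
    (k : ℕ) [NeZero k]
    (R a : Fin k → Ω → ℝ)
    (hmeasR : ∀ j, Measurable (R j)) (hmeasa : ∀ j, Measurable (a j))
    (Rmin Rmax amin amax : ℝ)
    (hRmin : 0 < Rmin) (hamin : 0 < amin)
    (hR : ∀ j ω, R j ω ∈ Set.Icc Rmin Rmax)
    (ha : ∀ j ω, a j ω ∈ Set.Icc amin amax)
    (μ : Measure ((Fin k → ℝ) × ℝ)) [IsProbabilityMeasure μ]
    (i : Fin k)
    (hybdd : ∃ Y : ℝ, μ {z | z.2 ∈ Set.Icc 0 Y} = 1)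
    (hri : ∫ z, (∫ ω, (Real.log (R i ω) - a i ω * z.2) ∂P) ∂μ = 0) :
    (∫ z, z.2 ∂μ = (∫ ω, Real.log (R i ω) ∂P) / ∫ ω, a i ω ∂P) ∧
    (∫ z, (∫ ω, (Real.log (R 0 ω) - a 0 ω * z.2) ∂P) ∂μ =
      (∫ ω, Real.log (R 0 ω) ∂P) -
        (∫ ω, a 0 ω ∂P) * ((∫ ω, Real.log (R i ω) ∂P) / ∫ ω, a i ω ∂P)) ∧
    (∫ z, (∫ ω, (Real.log (R 0 ω) - a 0 ω * z.2) ∂P) ∂μ =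
      (∫ ω, a 0 ω ∂P) *
        ((∫ ω, Real.log (R 0 ω) ∂P) / (∫ ω, a 0 ω ∂P) -
          (∫ ω, Real.log (R i ω) ∂P) / ∫ ω, a i ω ∂P)) := by
  obtain ⟨Y, hY⟩ := hybdd
  have growth_rate (j : Fin k) :
      ∫ z, (∫ ω, (Real.log (R j ω) - a j ω * z.2) ∂P) ∂μ =
        (∫ ω, Real.log (R j ω) ∂P) - (∫ ω, a j ω ∂P) * ∫ z, z.2 ∂μ :=
    integral_integral_sub_mul (integrable_log_of_mem_Icc (hmeasR j) hRmin (hR j))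
      (.of_mem_Icc amin amax (hmeasa j).aemeasurable (ae_of_all _ (ha j)))
      (integrable_snd_of_prob_mem_Icc hY)
  have hEa (j : Fin k) : ∫ ω, a j ω ∂P ≠ 0 :=
    (integral_pos_of_forall_mem_Icc (hmeasa j) hamin (ha j)).ne'
  have hmean : ∫ z, z.2 ∂μ = (∫ ω, Real.log (R i ω) ∂P) / ∫ ω, a i ω ∂P := by
    rw [growth_rate i, sub_eq_zero] at hri
    rw [hri, mul_div_cancel_left₀ _ (hEa i)]
  refine ⟨hmean, by rw [growth_rate 0, hmean], ?_⟩
  rw [growth_rate 0, hmean, mul_sub, mul_div_cancel₀ _ (hEa 0)]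

/-- Key computation in Theorems 1 and 2: for an ergodic invariant measure `μ`
of the k-host Holt–Lawton chain supported on `{x₁ = 0, xᵢ > 0}` with
`rᵢ(μ) = 0` (Proposition 2), the average parasitoid density is
`∫ y μ = E[ln Rᵢ]/E[aᵢ]`, and hence the external Lyapunov exponent of host 1 is
`r₁(μ) = E[ln R₁] - E[a₁]·(E[ln Rᵢ]/E[aᵢ]) = E[a₁]·(P₁* - Pᵢ*)`. -/
theorem external_lyapunov_host_one
    {Ω : Type*} [MeasurableSpace Ω] (P : Measure Ω) [IsProbabilityMeasure P]
    (k : ℕ) [NeZero k]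
    (R a : Fin k → Ω → ℝ) (I : Ω → ℝ)
    (hmeasR : ∀ j, Measurable (R j)) (hmeasa : ∀ j, Measurable (a j))
    (hmeasI : Measurable I)
    (Rmin Rmax amin amax Imin Imax : ℝ)
    (hRmin : 0 < Rmin) (hamin : 0 < amin) (hImin : 0 < Imin)
    (hR : ∀ j ω, R j ω ∈ Set.Icc Rmin Rmax)
    (ha : ∀ j ω, a j ω ∈ Set.Icc amin amax)
    (hI : ∀ ω, I ω ∈ Set.Icc Imin Imax)
    (μ : Measure ((Fin k → ℝ) × ℝ)) [IsProbabilityMeasure μ]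
    (i : Fin k) (hi : i ≠ 0)
    (hsupp : μ {z | z.1 0 = 0 ∧ 0 < z.1 i} = 1)
    (hybdd : ∃ Y : ℝ, μ {z | z.2 ∈ Set.Icc 0 Y} = 1)
    (hri : ∫ z, (∫ ω, (Real.log (R i ω) - a i ω * z.2) ∂P) ∂μ = 0) :
    (∫ z, z.2 ∂μ = (∫ ω, Real.log (R i ω) ∂P) / ∫ ω, a i ω ∂P) ∧
    (∫ z, (∫ ω, (Real.log (R 0 ω) - a 0 ω * z.2) ∂P) ∂μ =
      (∫ ω, Real.log (R 0 ω) ∂P) -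
        (∫ ω, a 0 ω ∂P) * ((∫ ω, Real.log (R i ω) ∂P) / ∫ ω, a i ω ∂P)) ∧
    (∫ z, (∫ ω, (Real.log (R 0 ω) - a 0 ω * z.2) ∂P) ∂μ =
      (∫ ω, a 0 ω ∂P) *
        ((∫ ω, Real.log (R 0 ω) ∂P) / (∫ ω, a 0 ω ∂P) -
          (∫ ω, Real.log (R i ω) ∂P) / ∫ ω, a i ω ∂P)) :=
  external_lyapunov_host_one_general P k R a hmeasR hmeasa Rmin Rmax amin amax hRmin hamin hR ha μ i
    hybdd hri
end
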